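/- Let κ : ℝ^d → ℝ be a smooth, compactly supported, even (κ(−u) = κ(u)) probability density with positive definite covariance matrix Σ = ∫ u uᵀ κ(u) du; for σ > 0, κ_σ(u) = σ^{−d} κ(u/σ) denotes its rescaling. Let g : ℝ^d → ℝ be smooth, positive, bounded, bounded below by a positive constant, with all partial derivatives up to order 4 bounded. Fix θ ∈ ℝ^d. Then there exists a constant C > 0 such that for all τ ∈ (0,1], ‖∇ log (κ_τ * g)(θ) − ∇ log g(θ)‖ ≤ C τ². -/

import Mathlib

open MeasureTheory

lemma aux_lip {E W : Type*} [NormedAddCommGroup E] [NormedSpace ℝ E]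
    [NormedAddCommGroup W] [NormedSpace ℝ W] {F : E → W} (hF : Differentiable ℝ F)
    {M : ℝ} (hM : ∀ x, ‖fderiv ℝ F x‖ ≤ M) (x y : E) : ‖F x - F y‖ ≤ M * ‖x - y‖ :=
  Convex.norm_image_sub_le_of_norm_fderiv_le (fun z _ => (hF z))
    (fun z _ => hM z) convex_univ (Set.mem_univ y) (Set.mem_univ x)

lemma aux_taylor {E : Type*} [NormedAddCommGroup E] [NormedSpace ℝ E]
    {f : E → ℝ} (hf : Differentiable ℝ f) {M : ℝ} (hM : 0 ≤ M)
    (hL : ∀ x y, ‖fderiv ℝ f x - fderiv ℝ f y‖ ≤ M * ‖x - y‖)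
    (θ v : E) : ‖f (θ + v) - f θ - fderiv ℝ f θ v‖ ≤ M * ‖v‖ ^ 2 := by
  have hd : ∀ w : E, HasFDerivAt (fun w => f (θ + w) - fderiv ℝ f θ w)
      (fderiv ℝ f (θ + w) - fderiv ℝ f θ) w := by
    intro w
    have h1 : HasFDerivAt (fun w => f (θ + w)) (fderiv ℝ f (θ + w)) w := by
      have h0 : HasFDerivAt (fun w : E => θ + w) (ContinuousLinearMap.id ℝ E) w := by
        simpa using (hasFDerivAt_id w).const_add θ
      have h2 := ((hf (θ + w)).hasFDerivAt).comp w h0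
      rw [ContinuousLinearMap.comp_id] at h2; exact h2
    exact h1.sub ((fderiv ℝ f θ).hasFDerivAt)
  have key := Convex.norm_image_sub_le_of_norm_hasFDerivWithin_le
    (f := fun w => f (θ + w) - fderiv ℝ f θ w)
    (f' := fun w => fderiv ℝ f (θ + w) - fderiv ℝ f θ) (C := M * ‖v‖)
    (s := Metric.closedBall (0 : E) ‖v‖)
    (fun w _ => (hd w).hasFDerivWithinAt)
    (fun w hw => by
      have h1 : ‖fderiv ℝ f (θ + w) - fderiv ℝ f θ‖ ≤ M * ‖w‖ := by
        simpa [add_sub_cancel_left] using hL (θ + w) θ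
      have h2 : ‖w‖ ≤ ‖v‖ := by simpa using Metric.mem_closedBall.mp hw
      exact h1.trans (mul_le_mul_of_nonneg_left h2 hM))
    (convex_closedBall _ _) (Metric.mem_closedBall_self (norm_nonneg v))
    (show v ∈ Metric.closedBall (0 : E) ‖v‖ from Metric.mem_closedBall.mpr (by simp))
  simp only [add_zero, map_zero, sub_zero] at key
  calc ‖f (θ + v) - f θ - fderiv ℝ f θ v‖
      = ‖f (θ + v) - fderiv ℝ f θ v - f θ‖ := by rw [sub_right_comm]
    _ ≤ M * ‖v‖ * ‖v‖ := key
    _ = M * ‖v‖ ^ 2 := by ring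

lemma aux_even_int {d : ℕ} {κ : (Fin d → ℝ) → ℝ} (hκ_even : ∀ u, κ (-u) = κ u)
    (L : (Fin d → ℝ) →L[ℝ] ℝ) : ∫ u, κ u * L u = 0 := by
  have h := integral_neg_eq_self (fun u : Fin d → ℝ => κ u * L u) volume
  have h2 : (fun u : Fin d → ℝ => κ (-u) * L (-u)) = fun u => -(κ u * L u) := by
    funext u; rw [hκ_even, map_neg]; ring
  rw [h2, integral_neg] at h
  linarith

lemma aux_key {d : ℕ} {κ : (Fin d → ℝ) → ℝ} (hκc : Continuous κ) (hκ_supp : HasCompactSupport κ)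
    (hκ_nonneg : ∀ u, 0 ≤ κ u) (hκ_prob : (∫ u, κ u) = 1) (hκ_even : ∀ u, κ (-u) = κ u)
    {f : (Fin d → ℝ) → ℝ} (hf : Differentiable ℝ f) (hfc : Continuous f) {M : ℝ} (hM : 0 ≤ M)
    (hlip : ∀ x y, ‖fderiv ℝ f x - fderiv ℝ f y‖ ≤ M * ‖x - y‖)
    (θ : Fin d → ℝ) {τ : ℝ} (hτ : 0 < τ) :
    |(∫ u, κ u * f (θ - τ • u)) - f θ| ≤ M * (∫ u, κ u * ‖u‖ ^ 2) * τ ^ 2 := by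
  set L := fderiv ℝ f θ with hL
  set R : (Fin d → ℝ) → ℝ := fun u => f (θ - τ • u) - f θ - L (-(τ • u)) with hRdef
  have hint : ∀ {h : (Fin d → ℝ) → ℝ}, Continuous h → Integrable (fun u => κ u * h u) :=
    fun {h} hh => (hκc.mul hh).integrable_of_hasCompactSupport (hκ_supp.mul_right)
  have hRc : Continuous R := by
    refine ((hfc.comp (continuous_const.sub (continuous_id.const_smul τ))).sub
      continuous_const).sub (L.continuous.comp ((continuous_id.const_smul τ).neg))
  have h1 : Integrable (fun u => κ u * R u) := hint hRc
  have h2 : Integrable (fun u : Fin d → ℝ => κ u * f θ) := hint continuous_const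
  have h3 : Integrable (fun u : Fin d → ℝ => κ u * L u) := hint L.continuous
  have h3' : Integrable (fun u : Fin d → ℝ => (-τ) * (κ u * L u)) := h3.const_mul _
  have hfeq : (fun u => κ u * f (θ - τ • u))
      = fun u => κ u * R u + (κ u * f θ + (-τ) * (κ u * L u)) := by
    funext u
    have hLs : L (-(τ • u)) = (-τ) * L u := by
      rw [← neg_smul, L.map_smul, smul_eq_mul]
    simp only [hRdef, hLs]; ring
  have hsplit : (∫ u, κ u * f (θ - τ • u)) = (∫ u, κ u * R u) + f θ := by
    have h23 : Integrable (fun u : Fin d → ℝ => κ u * f θ + -τ * (κ u * L u)) volume :=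
      h2.add h3'
    rw [hfeq, integral_add h1 h23, integral_add h2 h3', integral_const_mul,
      aux_even_int hκ_even L, integral_mul_const, hκ_prob, one_mul]
    ring
  have hRb : ∀ u, ‖κ u * R u‖ ≤ κ u * (M * τ ^ 2 * ‖u‖ ^ 2) := by
    intro u
    have ht := aux_taylor hf hM hlip θ (-(τ • u))
    rw [← sub_eq_add_neg, ← hL] at ht
    have hnorm : ‖-(τ • u)‖ ^ 2 = τ ^ 2 * ‖u‖ ^ 2 := by
      rw [norm_neg, norm_smul, Real.norm_eq_abs, abs_of_pos hτ]; ring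
    calc ‖κ u * R u‖ = κ u * ‖R u‖ := by
          rw [norm_mul, Real.norm_eq_abs (κ u), abs_of_nonneg (hκ_nonneg u)]
      _ ≤ κ u * (M * τ ^ 2 * ‖u‖ ^ 2) := by
          refine mul_le_mul_of_nonneg_left ?_ (hκ_nonneg u)
          calc ‖R u‖ ≤ M * ‖-(τ • u)‖ ^ 2 := ht
            _ = M * τ ^ 2 * ‖u‖ ^ 2 := by rw [hnorm]; ring
  have hband : Integrable (fun u => κ u * (M * τ ^ 2 * ‖u‖ ^ 2)) :=
    hint (continuous_const.mul (continuous_norm.pow 2))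
  have hnb := norm_integral_le_of_norm_le hband (Filter.Eventually.of_forall hRb)
  rw [hsplit, add_sub_cancel_right]
  calc |∫ u, κ u * R u| ≤ ∫ u, κ u * (M * τ ^ 2 * ‖u‖ ^ 2) := by
        rw [← Real.norm_eq_abs]; exact hnb
    _ = M * (∫ u, κ u * ‖u‖ ^ 2) * τ ^ 2 := by
        rw [show (fun u : Fin d → ℝ => κ u * (M * τ ^ 2 * ‖u‖ ^ 2))
            = fun u => (M * τ ^ 2) * (κ u * ‖u‖ ^ 2) from by funext u; ring,
          integral_const_mul]
        ring

set_option maxHeartbeats 1000000 in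
set_option synthInstance.maxHeartbeats 4000000 in
/-- Mollification lemma: the score of the extended model, i.e. the gradient of
`log (κ_τ * g)` where `κ_τ(u) = τ^{-d} κ(u/τ)` is the rescaled even perturbation kernel,
agrees with the score `∇ log g` up to an error of order `τ²`. -/
theorem stmt_5 {d : ℕ}
    (κ : (Fin d → ℝ) → ℝ) (g : (Fin d → ℝ) → ℝ)
    (hκ_smooth : ContDiff ℝ (⊤ : ℕ∞) κ)
    (hκ_supp : HasCompactSupport κ)
    (hκ_nonneg : ∀ u, 0 ≤ κ u)
    (hκ_prob : (∫ u, κ u) = 1)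
    (hκ_even : ∀ u, κ (-u) = κ u)
    (Sig : Matrix (Fin d) (Fin d) ℝ)
    (hSig : ∀ i j, Sig i j = ∫ u, u i * u j * κ u)
    (hSig_pd : Sig.PosDef)
    (hg_smooth : ContDiff ℝ (⊤ : ℕ∞) g)
    (hg_pos : ∀ x, 0 < g x)
    (hg_bdd : ∃ B, ∀ x, g x ≤ B)
    (hg_lb : ∃ c > 0, ∀ x, c ≤ g x)
    (hg_derivs : ∀ n : ℕ, n ≤ 4 → ∃ B, ∀ x, ‖iteratedFDeriv ℝ n g x‖ ≤ B)
    (θ : Fin d → ℝ) :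
    ∃ C > 0, ∀ τ : ℝ, τ ∈ Set.Ioc (0 : ℝ) 1 →
      ‖(fun i => fderiv ℝ
            (fun y => Real.log (∫ x : Fin d → ℝ, (τ ^ d)⁻¹ * κ (τ⁻¹ • (y - x)) * g x))
            θ (Pi.single i 1))
          - (fun i => fderiv ℝ (fun y => Real.log (g y)) θ (Pi.single i 1))‖
        ≤ C * τ ^ 2 := by
  classical
  obtain ⟨c, hc0, hglb⟩ := hg_lb
  obtain ⟨M1, hM1⟩ := hg_derivs 1 (by norm_num)
  obtain ⟨M2, hM2⟩ := hg_derivs 2 (by norm_num)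
  obtain ⟨M3, hM3⟩ := hg_derivs 3 (by norm_num)
  have hM1n : 0 ≤ M1 := le_trans (norm_nonneg _) (hM1 θ)
  have hM2n : 0 ≤ M2 := le_trans (norm_nonneg _) (hM2 θ)
  have hM3n : 0 ≤ M3 := le_trans (norm_nonneg _) (hM3 θ)
  have hκc : Continuous κ := hκ_smooth.continuous
  have hgcont : Continuous g := hg_smooth.continuous
  have hgd : Differentiable ℝ g := hg_smooth.differentiable (by simp)
  have hDg : ContDiff ℝ (⊤ : ℕ∞) (fderiv ℝ g) := hg_smooth.fderiv_right (by simp)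
  have hDgc : Continuous (fderiv ℝ g) := hDg.continuous
  have hDgd : Differentiable ℝ (fderiv ℝ g) := hDg.differentiable (by simp)
  have hD2g : ContDiff ℝ (⊤ : ℕ∞) (fderiv ℝ (fderiv ℝ g)) := hDg.fderiv_right (by simp)
  have hD2gd : Differentiable ℝ (fderiv ℝ (fderiv ℝ g)) := hD2g.differentiable (by simp)
  have hb1 : ∀ x, ‖fderiv ℝ g x‖ ≤ M1 := by
    intro x
    have e : ‖fderiv ℝ g x‖ = ‖iteratedFDeriv ℝ 1 g x‖ := by
      rw [← norm_iteratedFDeriv_fderiv, norm_iteratedFDeriv_zero]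
    rw [e]; exact hM1 x
  have hb2 : ∀ x, ‖fderiv ℝ (fderiv ℝ g) x‖ ≤ M2 := by
    intro x
    have e : ‖fderiv ℝ (fderiv ℝ g) x‖ = ‖iteratedFDeriv ℝ 2 g x‖ := by
      calc ‖fderiv ℝ (fderiv ℝ g) x‖
          = ‖iteratedFDeriv ℝ 0 (fderiv ℝ (fderiv ℝ g)) x‖ := by rw [norm_iteratedFDeriv_zero]
        _ = ‖iteratedFDeriv ℝ 1 (fderiv ℝ g) x‖ := norm_iteratedFDeriv_fderiv
        _ = ‖iteratedFDeriv ℝ 2 g x‖ := norm_iteratedFDeriv_fderiv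
    rw [e]; exact hM2 x
  have hlipDg : ∀ x y, ‖fderiv ℝ g x - fderiv ℝ g y‖ ≤ M2 * ‖x - y‖ :=
    aux_lip hDgd hb2
  have hlipD2g : ∀ x y,
      ‖fderiv ℝ (fderiv ℝ g) x - fderiv ℝ (fderiv ℝ g) y‖ ≤ M3 * ‖x - y‖ := by
    intro x y
    have hI : ‖iteratedFDeriv ℝ 2 g x - iteratedFDeriv ℝ 2 g y‖ ≤ M3 * ‖x - y‖ := by
      refine aux_lip (ContDiff.differentiable_iteratedFDeriv (m := 2)
        (WithTop.coe_lt_coe.mpr (ENat.natCast_lt_top 2)) hg_smooth) (fun z => ?_) x y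
      rw [norm_fderiv_iteratedFDeriv]; exact hM3 z
    have hK : 0 ≤ M3 * ‖x - y‖ := by positivity
    refine ContinuousLinearMap.opNorm_le_bound _ hK (fun v => ?_)
    refine ContinuousLinearMap.opNorm_le_bound _ (by positivity) (fun w => ?_)
    have e : (fderiv ℝ (fderiv ℝ g) x - fderiv ℝ (fderiv ℝ g) y) v w
        = (iteratedFDeriv ℝ 2 g x - iteratedFDeriv ℝ 2 g y) ![v, w] := by
      simp [iteratedFDeriv_two_apply]
    rw [e]
    calc _ ≤ ‖iteratedFDeriv ℝ 2 g x - iteratedFDeriv ℝ 2 g y‖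
            * ∏ i, ‖(![v, w] : Fin 2 → (Fin d → ℝ)) i‖ :=
          ContinuousMultilinearMap.le_opNorm _ _
      _ ≤ M3 * ‖x - y‖ * ∏ i, ‖(![v, w] : Fin 2 → (Fin d → ℝ)) i‖ := by gcongr
      _ = M3 * ‖x - y‖ * ‖v‖ * ‖w‖ := by simp [Fin.prod_univ_two]; ring
  have hA_norm : ∀ i : Fin d,
      ‖ContinuousLinearMap.apply ℝ ℝ ((Pi.single i 1 : Fin d → ℝ))‖ ≤ 1 := by
    intro i
    refine ContinuousLinearMap.opNorm_le_bound _ zero_le_one (fun T => ?_)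
    calc ‖T (Pi.single i 1)‖ ≤ ‖T‖ * ‖(Pi.single i 1 : Fin d → ℝ)‖ := T.le_opNorm _
      _ = 1 * ‖T‖ := by rw [Pi.norm_single, norm_one]; ring
  have hfi_diff : ∀ i : Fin d,
      Differentiable ℝ (fun x => fderiv ℝ g x (Pi.single i 1)) := by
    intro i
    exact (ContinuousLinearMap.apply ℝ ℝ (Pi.single i 1)).differentiable.comp hDgd
  have hfi_cont : ∀ i : Fin d,
      Continuous (fun x => fderiv ℝ g x (Pi.single i 1)) := by
    intro i
    exact (ContinuousLinearMap.apply ℝ ℝ (Pi.single i 1)).continuous.comp hDgc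
  have hfi_fderiv : ∀ (i : Fin d) (x : Fin d → ℝ),
      fderiv ℝ (fun x => fderiv ℝ g x (Pi.single i 1)) x
      = (ContinuousLinearMap.apply ℝ ℝ ((Pi.single i 1 : Fin d → ℝ))).comp
          (fderiv ℝ (fderiv ℝ g) x) := by
    intro i x
    exact (((ContinuousLinearMap.apply ℝ ℝ
      ((Pi.single i 1 : Fin d → ℝ))).hasFDerivAt).comp x (hDgd x).hasFDerivAt).fderiv
  have hfi_lip : ∀ (i : Fin d) (x y : Fin d → ℝ),
      ‖fderiv ℝ (fun x => fderiv ℝ g x (Pi.single i 1)) x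
        - fderiv ℝ (fun x => fderiv ℝ g x (Pi.single i 1)) y‖ ≤ M3 * ‖x - y‖ := by
    intro i x y
    rw [hfi_fderiv i x, hfi_fderiv i y, ← ContinuousLinearMap.comp_sub]
    calc ‖(ContinuousLinearMap.apply ℝ ℝ ((Pi.single i 1 : Fin d → ℝ))).comp
            (fderiv ℝ (fderiv ℝ g) x - fderiv ℝ (fderiv ℝ g) y)‖
        ≤ ‖ContinuousLinearMap.apply ℝ ℝ ((Pi.single i 1 : Fin d → ℝ))‖
            * ‖fderiv ℝ (fderiv ℝ g) x - fderiv ℝ (fderiv ℝ g) y‖ :=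
          ContinuousLinearMap.opNorm_comp_le _ _
      _ ≤ 1 * (M3 * ‖x - y‖) :=
          mul_le_mul (hA_norm i) (hlipD2g x y) (ContinuousLinearMap.opNorm_nonneg _) zero_le_one
      _ = M3 * ‖x - y‖ := one_mul _
  set S2 : ℝ := ∫ u : Fin d → ℝ, κ u * ‖u‖ ^ 2 with hS2
  have hS2n : 0 ≤ S2 := integral_nonneg fun u => mul_nonneg (hκ_nonneg u) (by positivity)
  set C0 : ℝ := M3 * S2 / c + M1 * (M2 * S2 / (c * c)) with hC0
  have hC0n : 0 ≤ C0 := by positivity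
  refine ⟨C0 + 1, by positivity, ?_⟩
  rintro τ ⟨hτ0, hτ1⟩
  have hτne : τ ≠ 0 := ne_of_gt hτ0
  have hτd : (0 : ℝ) < τ ^ d := pow_pos hτ0 d
  -- change of variables
  have hfun : ∀ y : Fin d → ℝ,
      (∫ x : Fin d → ℝ, (τ ^ d)⁻¹ * κ (τ⁻¹ • (y - x)) * g x)
      = ∫ u, κ u * g (y - τ • u) := by
    intro y
    have t1 : (∫ x : Fin d → ℝ, (τ ^ d)⁻¹ * κ (τ⁻¹ • (y - x)) * g x)
        = ∫ t : Fin d → ℝ, (τ ^ d)⁻¹ * κ (τ⁻¹ • t) * g (y - t) := by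
      have h := integral_sub_left_eq_self
        (fun t : Fin d → ℝ => (τ ^ d)⁻¹ * κ (τ⁻¹ • t) * g (y - t)) volume y
      simpa [sub_sub_cancel] using h
    have t2 : (∫ t : Fin d → ℝ, κ (τ⁻¹ • t) * g (y - t))
        = τ ^ d * ∫ u, κ u * g (y - τ • u) := by
      have h := MeasureTheory.Measure.integral_comp_smul volume
        (fun u : Fin d → ℝ => κ u * g (y - τ • u)) τ⁻¹
      rw [Module.finrank_fin_fun] at h
      have e1 : ∀ t : Fin d → ℝ, g (y - τ • τ⁻¹ • t) = g (y - t) := fun t => by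
        rw [smul_inv_smul₀ hτne]
      simp only [e1] at h
      rw [h, smul_eq_mul]
      congr 1
      rw [inv_pow, inv_inv, abs_of_pos hτd]
    calc (∫ x : Fin d → ℝ, (τ ^ d)⁻¹ * κ (τ⁻¹ • (y - x)) * g x)
        = ∫ t : Fin d → ℝ, (τ ^ d)⁻¹ * (κ (τ⁻¹ • t) * g (y - t)) := by
          rw [t1]; congr 1; funext t; ring
      _ = (τ ^ d)⁻¹ * ∫ t : Fin d → ℝ, κ (τ⁻¹ • t) * g (y - t) := integral_const_mul _ _
      _ = (τ ^ d)⁻¹ * (τ ^ d * ∫ u, κ u * g (y - τ • u)) := by rw [t2]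
      _ = ∫ u, κ u * g (y - τ • u) := by field_simp
  set P : ℝ := ∫ u : Fin d → ℝ, κ u * g (θ - τ • u) with hPdef
  have hPc : c ≤ P := by
    have h1 : (∫ u : Fin d → ℝ, κ u * c) ≤ ∫ u : Fin d → ℝ, κ u * g (θ - τ • u) := by
      refine integral_mono
        ((hκc.mul continuous_const).integrable_of_hasCompactSupport hκ_supp.mul_right)
        ((hκc.mul (hgcont.comp (continuous_const.sub
          (continuous_id.const_smul τ)))).integrable_of_hasCompactSupport
          hκ_supp.mul_right)
        (fun u => mul_le_mul_of_nonneg_left (hglb _) (hκ_nonneg u))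
    rw [integral_mul_const, hκ_prob, one_mul] at h1
    exact h1
  have hPpos : 0 < P := lt_of_lt_of_le hc0 hPc
  have hconv : HasFDerivAt (fun y => ∫ u : Fin d → ℝ, κ u * g (y - τ • u))
      (∫ u : Fin d → ℝ, κ u • fderiv ℝ g (θ - τ • u)) θ := by
    refine hasFDerivAt_integral_of_dominated_of_fderiv_le
      (F := fun y (u : Fin d → ℝ) => κ u * g (y - τ • u))
      (F' := fun y (u : Fin d → ℝ) => κ u • fderiv ℝ g (y - τ • u))
      (bound := fun u => ‖κ u‖ * M1) (Metric.ball_mem_nhds θ one_pos) ?_ ?_ ?_ ?_ ?_ ?_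
    · filter_upwards with x
      exact (hκc.mul (hgcont.comp (continuous_const.sub
        (continuous_id.const_smul τ)))).aestronglyMeasurable
    · exact (hκc.mul (hgcont.comp (continuous_const.sub
        (continuous_id.const_smul τ)))).integrable_of_hasCompactSupport hκ_supp.mul_right
    · exact (hκc.smul (hDgc.comp (continuous_const.sub
        (continuous_id.const_smul τ)))).aestronglyMeasurable
    · filter_upwards with u
      intro x hx
      exact (norm_smul_le _ _).trans (mul_le_mul_of_nonneg_left (hb1 _) (norm_nonneg _))
    · exact (hκc.norm.mul continuous_const).integrable_of_hasCompactSupport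
        (hκ_supp.norm.mul_right)
    · filter_upwards with u
      intro x hx
      have h1 : HasFDerivAt (fun y : Fin d → ℝ => y - τ • u)
          (ContinuousLinearMap.id ℝ (Fin d → ℝ)) x := (hasFDerivAt_id x).sub_const (τ • u)
      have h2 := ((hgd (x - τ • u)).hasFDerivAt).comp x h1
      have h3 := h2.const_mul (κ u)
      simpa [ContinuousLinearMap.comp_id] using h3
  have hlog : HasFDerivAt (fun y => Real.log (∫ u : Fin d → ℝ, κ u * g (y - τ • u)))
      (P⁻¹ • ∫ u : Fin d → ℝ, κ u • fderiv ℝ g (θ - τ • u)) θ :=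
    hconv.log (ne_of_gt hPpos)
  have hfeq2 : (fun y => Real.log (∫ x : Fin d → ℝ, (τ ^ d)⁻¹ * κ (τ⁻¹ • (y - x)) * g x))
      = fun y => Real.log (∫ u : Fin d → ℝ, κ u * g (y - τ • u)) := by
    funext y; rw [hfun y]
  have hD : fderiv ℝ
      (fun y => Real.log (∫ x : Fin d → ℝ, (τ ^ d)⁻¹ * κ (τ⁻¹ • (y - x)) * g x)) θ
      = P⁻¹ • ∫ u : Fin d → ℝ, κ u • fderiv ℝ g (θ - τ • u) := by
    rw [hfeq2]; exact hlog.fderiv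
  have hIint : Integrable (fun u : Fin d → ℝ => κ u • fderiv ℝ g (θ - τ • u)) :=
    (hκc.smul (hDgc.comp (continuous_const.sub
      (continuous_id.const_smul τ)))).integrable_of_hasCompactSupport hκ_supp.smul_right
  have happ : ∀ i : Fin d,
      fderiv ℝ (fun y => Real.log (∫ x : Fin d → ℝ, (τ ^ d)⁻¹ * κ (τ⁻¹ • (y - x)) * g x))
        θ (Pi.single i 1)
      = P⁻¹ * ∫ u : Fin d → ℝ, κ u * fderiv ℝ g (θ - τ • u) (Pi.single i 1) := by
    intro i
    rw [hD, ContinuousLinearMap.smul_apply, ContinuousLinearMap.integral_apply hIint]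
    simp only [ContinuousLinearMap.smul_apply, smul_eq_mul]
  have hlogg : ∀ i : Fin d, fderiv ℝ (fun y => Real.log (g y)) θ (Pi.single i 1)
      = (g θ)⁻¹ * fderiv ℝ g θ (Pi.single i 1) := by
    intro i
    rw [((hgd θ).hasFDerivAt.log (ne_of_gt (hg_pos θ))).fderiv]
    simp [smul_eq_mul]
  have hPb : |P - g θ| ≤ M2 * S2 * τ ^ 2 :=
    aux_key hκc hκ_supp hκ_nonneg hκ_prob hκ_even hgd hgcont hM2n hlipDg θ hτ0
  have hN : ∀ i : Fin d,
      |(∫ u : Fin d → ℝ, κ u * fderiv ℝ g (θ - τ • u) (Pi.single i 1))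
        - fderiv ℝ g θ (Pi.single i 1)| ≤ M3 * S2 * τ ^ 2 := fun i =>
    aux_key hκc hκ_supp hκ_nonneg hκ_prob hκ_even (hfi_diff i) (hfi_cont i) hM3n
      (hfi_lip i) θ hτ0
  have ha : ∀ i : Fin d, |fderiv ℝ g θ (Pi.single i 1)| ≤ M1 := by
    intro i
    calc |fderiv ℝ g θ (Pi.single i 1)| = ‖fderiv ℝ g θ (Pi.single i 1)‖ :=
          (Real.norm_eq_abs _).symm
      _ ≤ ‖fderiv ℝ g θ‖ * ‖(Pi.single i 1 : Fin d → ℝ)‖ :=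
          ContinuousLinearMap.le_opNorm _ _
      _ = ‖fderiv ℝ g θ‖ := by rw [Pi.norm_single, norm_one, mul_one]
      _ ≤ M1 := hb1 θ
  have hcoord : ∀ i : Fin d,
      |P⁻¹ * (∫ u : Fin d → ℝ, κ u * fderiv ℝ g (θ - τ • u) (Pi.single i 1))
        - (g θ)⁻¹ * fderiv ℝ g θ (Pi.single i 1)| ≤ C0 * τ ^ 2 := by
    intro i
    set N : ℝ := ∫ u : Fin d → ℝ, κ u * fderiv ℝ g (θ - τ • u) (Pi.single i 1) with hNdef
    set a : ℝ := fderiv ℝ g θ (Pi.single i 1) with hadef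
    have hbpos : 0 < g θ := hg_pos θ
    have hbc : c ≤ g θ := hglb θ
    have key : P⁻¹ * N - (g θ)⁻¹ * a = (N - a) / P + a * ((g θ - P) / (P * g θ)) := by
      field_simp
      ring
    rw [key]
    have e1 : |(N - a) / P| ≤ (M3 * S2 * τ ^ 2) / c := by
      rw [abs_div, abs_of_pos hPpos]
      exact div_le_div₀ (by positivity) (hN i) hc0 hPc
    have e2 : |a * ((g θ - P) / (P * g θ))| ≤ M1 * (M2 * S2 * τ ^ 2 / (c * c)) := by
      rw [abs_mul, abs_div, abs_of_pos (mul_pos hPpos hbpos)]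
      have h1 : |g θ - P| ≤ M2 * S2 * τ ^ 2 := by rw [abs_sub_comm]; exact hPb
      have h2 : |g θ - P| / (P * g θ) ≤ M2 * S2 * τ ^ 2 / (c * c) :=
        div_le_div₀ (by positivity) h1 (by positivity)
          (mul_le_mul hPc hbc hc0.le (le_trans hc0.le hPc))
      exact mul_le_mul (ha i) h2 (by positivity) hM1n
    calc |(N - a) / P + a * ((g θ - P) / (P * g θ))|
        ≤ |(N - a) / P| + |a * ((g θ - P) / (P * g θ))| := abs_add_le _ _
      _ ≤ (M3 * S2 * τ ^ 2) / c + M1 * (M2 * S2 * τ ^ 2 / (c * c)) := add_le_add e1 e2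
      _ = C0 * τ ^ 2 := by rw [hC0]; field_simp
  have hCτ : (0 : ℝ) ≤ (C0 + 1) * τ ^ 2 := by positivity
  refine (pi_norm_le_iff_of_nonneg hCτ).2 (fun i => ?_)
  rw [Pi.sub_apply, Real.norm_eq_abs, happ i, hlogg i]
  calc |P⁻¹ * (∫ u : Fin d → ℝ, κ u * fderiv ℝ g (θ - τ • u) (Pi.single i 1))
        - (g θ)⁻¹ * fderiv ℝ g θ (Pi.single i 1)| ≤ C0 * τ ^ 2 := hcoord i
    _ ≤ (C0 + 1) * τ ^ 2 := by nlinarith [sq_nonneg τ]
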